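/- Let G be a finite connected simple graph with n ≥ 2 vertices and m edges, and let k ≥ 2 be an integer. If m ≤ 3(n + k − 2) and n > 12(k − 2), then the bondage number satisfies b(G) ≤ 11. -/

import Mathlib

/-- A finset `D` of vertices is a dominating set of `G` if every vertex not in `D`
is adjacent to some vertex in `D`. -/
def SimpleGraph.IsDominatingSet {V : Type*} (G : SimpleGraph V) (D : Finset V) : Prop :=
  ∀ v : V, v ∉ D → ∃ u ∈ D, G.Adj u v

/-- The domination number of `G`: the minimum cardinality of a dominating set. -/
noncomputable def SimpleGraph.dominationNumber {V : Type*} [Fintype V]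
    (G : SimpleGraph V) : ℕ :=
  sInf {k | ∃ D : Finset V, G.IsDominatingSet D ∧ D.card = k}

/-- The bondage number of `G`: the minimum cardinality of a set `B` of edges of `G`
whose removal increases the domination number. -/
noncomputable def SimpleGraph.bondageNumber {V : Type*} [Fintype V]
    (G : SimpleGraph V) : ℕ :=
  sInf {k | ∃ B : Finset (Sym2 V), ↑B ⊆ G.edgeSet ∧ B.card = k ∧
    G.dominationNumber < (G.deleteEdges ↑B).dominationNumber}

/-!
If two distinct vertices `u`, `v` are joined through a vertex `w` of the closed neighbourhood
of `u`, deleting every edge at `u` and every edge at `v` except `wv` leaves `u` isolated and `v`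
pendant at `w`; a minimum dominating set of the new graph then contains `u` and meets `{v, w}`,
and trading those vertices for `w` dominates `G` with fewer vertices. Hence
`b(G) ≤ deg u + deg v - 1` for all such pairs.

It remains to find such a pair with `deg u + deg v ≤ 12`. If there is none, the closed
neighbourhoods of the vertices of degree at most `6` are pairwise disjoint, and a discharging
count over them gives `13 n ≤ 4 m`, contradicting `m ≤ 3 (n + k - 2) < 13 n / 4`.
-/

namespace SimpleGraph

variable {V : Type*} [Fintype V]

lemma dominationNumber_le (G : SimpleGraph V) {D : Finset V} (hD : G.IsDominatingSet D) :
    G.dominationNumber ≤ D.card :=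
  Nat.sInf_le ⟨D, hD, rfl⟩

lemma exists_isDominatingSet_card_eq_dominationNumber (G : SimpleGraph V) :
    ∃ D : Finset V, G.IsDominatingSet D ∧ D.card = G.dominationNumber :=
  Nat.sInf_mem (s := {k | ∃ D : Finset V, G.IsDominatingSet D ∧ D.card = k})
    ⟨_, Finset.univ, fun v hv => absurd (Finset.mem_univ v) hv, rfl⟩

lemma bondageNumber_le (G : SimpleGraph V) {B : Finset (Sym2 V)} (hB : ↑B ⊆ G.edgeSet)
    (h : G.dominationNumber < (G.deleteEdges ↑B).dominationNumber) :
    G.bondageNumber ≤ B.card :=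
  Nat.sInf_le ⟨B, hB, rfl, h⟩

lemma mul_card_le_four_mul_card_edgeFinset (G : SimpleGraph V) [DecidableRel G.Adj] {s : ℕ}
    (hdeg : ∀ v, 0 < G.degree v)
    (hs : ∀ u v w, u ≠ v → (w = u ∨ G.Adj w u) → G.Adj w v →
      s ≤ G.degree u + G.degree v) :
    s * Fintype.card V ≤ 4 * G.edgeFinset.card := by
  classical
  set A := Finset.univ.filter fun a => 2 * G.degree a < s
  set N : V → Finset V := fun a => insert a (G.neighborFinset a)
  have hdisj : (A : Set V).PairwiseDisjoint N := by
    intro a ha b hb hab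
    replace ha := (Finset.mem_filter.mp ha).2
    replace hb := (Finset.mem_filter.mp hb).2
    refine Finset.disjoint_left.mpr fun x hxa hxb => ?_
    simp only [N, Finset.mem_insert, mem_neighborFinset] at hxa hxb
    have : s ≤ G.degree a + G.degree b := by
      by_cases hxb' : x = b
      · subst hxb'
        rcases hxa with rfl | hax
        · exact absurd rfl hab
        · exact hs a x a hab (Or.inl rfl) hax
      · exact hs a b x hab (hxa.imp id fun h => h.symm) (hxb.resolve_left hxb').symm
    omega
  have hA : ∀ a ∈ A, ∑ _x ∈ N a, s ≤ ∑ x ∈ N a, 2 * G.degree x := by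
    intro a ha
    have ha : 2 * G.degree a < s := (Finset.mem_filter.mp ha).2
    have hna : a ∉ G.neighborFinset a := by simp
    have hnbr : G.degree a * s ≤ ∑ b ∈ G.neighborFinset a, (G.degree a + G.degree b) := by
      rw [← card_neighborFinset_eq_degree, ← smul_eq_mul, ← Finset.sum_const]
      exact Finset.sum_le_sum fun b hb =>
        hs a b a (G.ne_of_adj ((G.mem_neighborFinset a b).mp hb)) (Or.inl rfl)
          ((G.mem_neighborFinset a b).mp hb)
    simp only [N, Finset.sum_insert hna, Finset.sum_const,
      card_neighborFinset_eq_degree, smul_eq_mul, Finset.sum_add_distrib,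
      ← Finset.mul_sum] at hnbr ⊢
    have := hdeg a
    -- with `d = deg a`: `s (d + 1) ≤ 2 d + 2 (d s - d²)` amounts to `(d - 1) (s - 2 d) ≥ 0`
    nlinarith
  set U := A.biUnion N
  have hU : ∑ _x ∈ U, s ≤ ∑ x ∈ U, 2 * G.degree x := by
    rw [Finset.sum_biUnion hdisj, Finset.sum_biUnion hdisj]
    exact Finset.sum_le_sum hA
  have hrest : ∑ _x ∈ Finset.univ \ U, s ≤ ∑ x ∈ Finset.univ \ U, 2 * G.degree x := by
    refine Finset.sum_le_sum fun x hx => ?_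
    have hxA : x ∉ A := fun hxA =>
      (Finset.mem_sdiff.mp hx).2 (Finset.mem_biUnion.mpr ⟨x, hxA, Finset.mem_insert_self _ _⟩)
    simpa [A] using hxA
  calc s * Fintype.card V = ∑ _x : V, s := by simp [mul_comm]
    _ = ∑ _x ∈ Finset.univ \ U, s + ∑ _x ∈ U, s :=
      (Finset.sum_sdiff (Finset.subset_univ U)).symm
    _ ≤ ∑ x ∈ Finset.univ \ U, 2 * G.degree x + ∑ x ∈ U, 2 * G.degree x :=
      add_le_add hrest hU
    _ = ∑ x, 2 * G.degree x := Finset.sum_sdiff (Finset.subset_univ U)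
    _ = 4 * G.edgeFinset.card := by
      rw [← Finset.mul_sum, G.sum_degrees_eq_twice_card_edges]; ring

variable [DecidableEq V]

lemma dominationNumber_lt_of_le_of_isolated {G G' : SimpleGraph V} (hG' : G' ≤ G) {u v w : V}
    (huv : u ≠ v) (hwu : w = u ∨ G.Adj w u) (hwv : G.Adj w v)
    (hu : ∀ x, ¬ G'.Adj x u) (hv : ∀ x, G'.Adj x v → x = w) :
    G.dominationNumber < G'.dominationNumber := by
  obtain ⟨D, hD, hDcard⟩ := G'.exists_isDominatingSet_card_eq_dominationNumber
  have huD : u ∈ D := by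
    by_contra h
    obtain ⟨y, -, hy⟩ := hD u h
    exact hu y hy
  set D' := insert w (D \ {u, v})
  have hD' : G.IsDominatingSet D' := by
    intro x hx
    have hwD' : w ∈ D' := Finset.mem_insert_self _ _
    by_cases hxu : x = u
    · subst hxu
      rcases hwu with rfl | hwx
      · exact absurd hwD' hx
      · exact ⟨w, hwD', hwx⟩
    by_cases hxv : x = v
    · exact ⟨w, hwD', hxv ▸ hwv⟩
    have hxD : x ∉ D := fun hxD => hx (by simp [D', hxD, hxu, hxv])
    obtain ⟨y, hyD, hy⟩ := hD x hxD
    have hyu : y ≠ u := by rintro rfl; exact hu x hy.symm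
    have hyv : y ≠ v := by rintro rfl; exact hx (hv x hy.symm ▸ hwD')
    exact ⟨y, by simp [D', hyD, hyu, hyv], hG' hy⟩
  have hcard : D'.card < D.card := by
    by_cases hvD : v ∈ D
    · have hpair : ({u, v} : Finset V) ⊆ D := Finset.insert_subset huD (by simpa using hvD)
      have := Finset.card_sdiff_add_card_eq_card hpair
      rw [Finset.card_pair huv] at this
      have : D'.card ≤ (D \ {u, v}).card + 1 := Finset.card_insert_le _ _
      omega
    · obtain ⟨y, hyD, hy⟩ := hD v hvD
      rw [hv y hy] at hyD hy
      have hwu' : w ≠ u := by rintro rfl; exact hu v hy.symm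
      have : D' = D \ {u, v} := Finset.insert_eq_of_mem (by simp [hyD, hwu', hwv.ne])
      rw [this]
      exact Finset.card_lt_card
        (Finset.ssubset_iff_of_subset Finset.sdiff_subset |>.mpr ⟨u, huD, by simp⟩)
  have := G.dominationNumber_le hD'
  omega

lemma bondageNumber_le_degree_add_degree_sub_one (G : SimpleGraph V) [DecidableRel G.Adj]
    {u v w : V} (huv : u ≠ v) (hwu : w = u ∨ G.Adj w u) (hwv : G.Adj w v) :
    G.bondageNumber ≤ G.degree u + G.degree v - 1 := by
  set B := G.incidenceFinset u ∪ (G.incidenceFinset v).erase s(w, v)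
  have hB : ↑B ⊆ G.edgeSet := by
    intro e he
    simp only [B, Finset.coe_union, Finset.coe_erase, coe_incidenceFinset] at he
    rcases he with he | he
    · exact G.incidenceSet_subset u he
    · exact G.incidenceSet_subset v he.1
  have hBcard : B.card ≤ G.degree u + (G.degree v - 1) := by
    have hwvI : s(w, v) ∈ G.incidenceFinset v :=
      (G.mem_incidenceFinset _ _).mpr (G.mk'_mem_incidenceSet_right_iff.mpr hwv)
    have := Finset.card_union_le (G.incidenceFinset u) ((G.incidenceFinset v).erase s(w, v))
    rwa [Finset.card_erase_of_mem hwvI, card_incidenceFinset_eq_degree,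
      card_incidenceFinset_eq_degree] at this
  have hu : ∀ x, ¬ (G.deleteEdges ↑B).Adj x u := by
    intro x hx
    rw [deleteEdges_adj] at hx
    exact hx.2 (by simp [B, mk'_mem_incidenceSet_right_iff, hx.1])
  have hv : ∀ x, (G.deleteEdges ↑B).Adj x v → x = w := by
    intro x hx
    rw [deleteEdges_adj] at hx
    by_contra hxw
    exact hx.2 (by simp [B, mk'_mem_incidenceSet_right_iff, hx.1, hx.1.ne, hxw])
  have := G.bondageNumber_le hB
    (dominationNumber_lt_of_le_of_isolated (G.deleteEdges_le _) huv hwu hwv hu hv)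
  have := hwv.degree_pos_right
  omega

end SimpleGraph

theorem stmt_10_general {V : Type*} [Fintype V] [DecidableEq V] (G : SimpleGraph V)
    [DecidableRel G.Adj] (hconn : G.Connected) (hn : 2 ≤ Fintype.card V)
    (k : ℕ)
    (hm : G.edgeFinset.card ≤ 3 * (Fintype.card V + k - 2))
    (hbig : 12 * (k - 2) < Fintype.card V) :
    G.bondageNumber ≤ 11 := by
  have : Nontrivial V := Fintype.one_lt_card_iff_nontrivial.mp hn
  by_contra! hb
  have := G.mul_card_le_four_mul_card_edgeFinset (s := 13)
    (hconn.preconnected.degree_pos_of_nontrivial ·) fun u v w huv hwu hwv => by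
      have := G.bondageNumber_le_degree_add_degree_sub_one huv hwu hwv
      omega
  omega

theorem stmt_10 {V : Type*} [Fintype V] [DecidableEq V] (G : SimpleGraph V)
    [DecidableRel G.Adj] (hconn : G.Connected) (hn : 2 ≤ Fintype.card V)
    (k : ℕ) (hk : 2 ≤ k)
    (hm : G.edgeFinset.card ≤ 3 * (Fintype.card V + k - 2))
    (hbig : 12 * (k - 2) < Fintype.card V) :
    G.bondageNumber ≤ 11 :=
  stmt_10_general G hconn hn k hm hbig
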